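/- arXiv:1702.06279 — 3 statements merged into one kernel-verified Lean document; each statement's English description precedes it below -/
import Mathlib

section
/- Define F(s) = ∫_0^{π/2} cos(2φ) / (sin²φ + s/4)^{1/2} dφ for s > 0. Then for every α ∈ (0, 3/2], the function s ↦ s^α F(s) is bounded on (0, ∞). -/
open Real

private lemma aux_inv {x y : ℝ} (hx : 0 < x) (hxy : x ≤ y) :
    1/x - 1/y ≤ (y^2 - x^2)/(2*x^3) := by
  have hy : 0 < y := lt_of_lt_of_le hx hxy
  rw [div_sub_div _ _ hx.ne' hy.ne', div_le_div_iff₀ (by positivity) (by positivity)]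
  nlinarith [sq_nonneg (y - x), mul_pos hx hy, sq_nonneg x, sq_nonneg y]

private lemma aux_cont (s : ℝ) (hs : 0 < s) :
    Continuous (fun φ : ℝ => Real.cos (2*φ) / Real.sqrt (Real.sin φ ^ 2 + s/4)) := by
  apply Continuous.div
  · fun_prop
  · fun_prop
  · intro x
    have : 0 < Real.sin x ^ 2 + s/4 := by positivity
    exact (Real.sqrt_pos.mpr this).ne'

private lemma aux_sqrt_quarter {s : ℝ} (hs : 0 ≤ s) : Real.sqrt (s/4) = Real.sqrt s / 2 := by
  rw [Real.sqrt_div hs, show (4:ℝ) = 2^2 by norm_num, Real.sqrt_sq (by norm_num : (0:ℝ) ≤ 2)]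

private lemma aux_denom {s : ℝ} (hs : 0 < s) (x : ℝ) :
    Real.sqrt s / 2 ≤ Real.sqrt (Real.sin x ^ 2 + s/4) := by
  rw [← aux_sqrt_quarter hs.le]
  exact Real.sqrt_le_sqrt (by nlinarith [sq_nonneg (Real.sin x)])

private lemma aux_pointwise_big {s : ℝ} (hs : 0 < s) (x : ℝ) :
    ‖Real.cos (2*x) / Real.sqrt (Real.sin x ^ 2 + s/4) - Real.cos (2*x) * (2/Real.sqrt s)‖
      ≤ 4 / (s * Real.sqrt s) := by
  have hss : 0 < Real.sqrt s := Real.sqrt_pos.mpr hs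
  set D := Real.sqrt (Real.sin x ^ 2 + s/4) with hD
  have hDpos : 0 < D := Real.sqrt_pos.mpr (by positivity)
  have hle : Real.sqrt s / 2 ≤ D := aux_denom hs x
  have hD2 : D^2 = Real.sin x ^ 2 + s/4 := Real.sq_sqrt (by positivity)
  have hs2 : (Real.sqrt s / 2)^2 = s/4 := by
    rw [div_pow, Real.sq_sqrt hs.le]; norm_num
  have key := aux_inv (x := Real.sqrt s / 2) (y := D) (by positivity) hle
  have hx3 : (Real.sqrt s / 2)^3 = s * Real.sqrt s / 8 := by
    have : Real.sqrt s ^ 3 = s * Real.sqrt s := by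
      rw [pow_succ, Real.sq_sqrt hs.le]
    rw [div_pow, this]; norm_num
  have key2 : 2 / Real.sqrt s - 1 / D ≤ 4 * Real.sin x ^ 2 / (s * Real.sqrt s) := by
    have h1 : 1 / (Real.sqrt s / 2) = 2 / Real.sqrt s := one_div_div _ _
    calc 2 / Real.sqrt s - 1 / D = 1 / (Real.sqrt s / 2) - 1 / D := by rw [h1]
      _ ≤ (D^2 - (Real.sqrt s / 2)^2) / (2 * (Real.sqrt s / 2)^3) := key
      _ = 4 * Real.sin x ^ 2 / (s * Real.sqrt s) := by
          rw [hD2, hs2, hx3]; ring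
  have hcos : |Real.cos (2*x)| ≤ 1 := Real.abs_cos_le_one _
  have hsin : Real.sin x ^ 2 ≤ 1 := Real.sin_sq_le_one x
  have hfac : Real.cos (2*x) / D - Real.cos (2*x) * (2/Real.sqrt s)
      = Real.cos (2*x) * (1/D - 2/Real.sqrt s) := by ring
  rw [Real.norm_eq_abs, hfac, abs_mul]
  have h1D : 1/D ≤ 2/Real.sqrt s := by
    calc 1/D ≤ 1/(Real.sqrt s / 2) := one_div_le_one_div_of_le (by positivity) hle
      _ = 2/Real.sqrt s := one_div_div _ _
  have habs : |1/D - 2/Real.sqrt s| = 2/Real.sqrt s - 1/D := by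
    rw [abs_sub_comm, abs_of_nonneg (by linarith)]
  calc |Real.cos (2*x)| * |1/D - 2/Real.sqrt s| ≤ 1 * (2/Real.sqrt s - 1/D) := by
        rw [habs]
        exact mul_le_mul hcos le_rfl (by linarith) zero_le_one
    _ = 2/Real.sqrt s - 1/D := one_mul _
    _ ≤ 4 * Real.sin x ^ 2 / (s * Real.sqrt s) := key2
    _ ≤ 4 / (s * Real.sqrt s) := by
        have h4 : 4 * Real.sin x ^ 2 ≤ 4 := by nlinarith
        exact (div_le_div_iff_of_pos_right (by positivity)).mpr h4

private lemma aux_big {s : ℝ} (hs : 0 < s) :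
    |∫ φ in (0:ℝ)..(π/2), Real.cos (2*φ) / Real.sqrt (Real.sin φ ^ 2 + s/4)|
      ≤ 2*π/(s*Real.sqrt s) := by
  have hss : 0 < Real.sqrt s := Real.sqrt_pos.mpr hs
  have hcont := aux_cont s hs
  have hint := hcont.intervalIntegrable (μ := MeasureTheory.volume) 0 (π/2)
  have hcont2 : Continuous (fun φ : ℝ => Real.cos (2*φ) * (2/Real.sqrt s)) := by fun_prop
  have hint2 := hcont2.intervalIntegrable (μ := MeasureTheory.volume) 0 (π/2)
  have hz : (∫ φ in (0:ℝ)..(π/2), Real.cos (2*φ)) = 0 := by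
    rw [intervalIntegral.integral_comp_mul_left Real.cos two_ne_zero]
    norm_num [integral_cos]
    rw [show 2*(π/2) = π by ring]
    exact Real.sin_pi
  have hz2 : (∫ φ in (0:ℝ)..(π/2), Real.cos (2*φ) * (2/Real.sqrt s)) = 0 := by
    rw [intervalIntegral.integral_mul_const, hz, zero_mul]
  have heq : (∫ φ in (0:ℝ)..(π/2), Real.cos (2*φ) / Real.sqrt (Real.sin φ ^ 2 + s/4))
      = ∫ φ in (0:ℝ)..(π/2),
          (Real.cos (2*φ) / Real.sqrt (Real.sin φ ^ 2 + s/4) - Real.cos (2*φ) * (2/Real.sqrt s)) := by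
    rw [intervalIntegral.integral_sub hint hint2, hz2, sub_zero]
  rw [heq]
  have hb := intervalIntegral.norm_integral_le_of_norm_le_const
    (a := 0) (b := π/2) (C := 4/(s*Real.sqrt s))
    (f := fun φ : ℝ => Real.cos (2*φ) / Real.sqrt (Real.sin φ ^ 2 + s/4)
            - Real.cos (2*φ) * (2/Real.sqrt s))
    (fun x _ => aux_pointwise_big hs x)
  rw [Real.norm_eq_abs] at hb
  calc |∫ φ in (0:ℝ)..(π/2),
          (Real.cos (2*φ) / Real.sqrt (Real.sin φ ^ 2 + s/4) - Real.cos (2*φ) * (2/Real.sqrt s))|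
      ≤ 4/(s*Real.sqrt s) * |π/2 - 0| := hb
    _ = 2*π/(s*Real.sqrt s) := by
        rw [sub_zero, abs_of_nonneg (by positivity)]; ring

private lemma aux_small {s : ℝ} (hs : 0 < s) (hs1 : s ≤ 1) :
    |∫ φ in (0:ℝ)..(π/2), Real.cos (2*φ) / Real.sqrt (Real.sin φ ^ 2 + s/4)|
      ≤ 2 + π/2 * Real.log (π/2) - π/4 * Real.log s := by
  set g := fun φ : ℝ => Real.cos (2*φ) / Real.sqrt (Real.sin φ ^ 2 + s/4) with hg
  have hcont := aux_cont s hs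
  have hq : 0 < Real.sqrt s := Real.sqrt_pos.mpr hs
  have hq1 : Real.sqrt s ≤ 1 := Real.sqrt_le_one.mpr hs1
  have hpi3 := Real.pi_gt_three
  have hqpi : Real.sqrt s ≤ π/2 := hq1.trans (by linarith)
  have hsplit : (∫ φ in (0:ℝ)..(π/2), g φ)
      = (∫ φ in (0:ℝ)..(Real.sqrt s), g φ) + ∫ φ in (Real.sqrt s)..(π/2), g φ :=
    (intervalIntegral.integral_add_adjacent_intervals
      (hcont.intervalIntegrable _ _) (hcont.intervalIntegrable _ _)).symm
  have hb1 : |∫ φ in (0:ℝ)..(Real.sqrt s), g φ| ≤ 2 := by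
    have h := intervalIntegral.norm_integral_le_of_norm_le_const
      (a := 0) (b := Real.sqrt s) (C := 2/Real.sqrt s) (f := g) ?_
    · rw [Real.norm_eq_abs] at h
      calc |∫ φ in (0:ℝ)..(Real.sqrt s), g φ| ≤ 2/Real.sqrt s * |Real.sqrt s - 0| := h
        _ = 2 := by rw [sub_zero, abs_of_nonneg hq.le]; field_simp
    · intro x _
      rw [hg, Real.norm_eq_abs, abs_div, abs_of_nonneg (Real.sqrt_nonneg _)]
      calc |Real.cos (2*x)| / Real.sqrt (Real.sin x ^ 2 + s/4)
          ≤ 1 / (Real.sqrt s / 2) :=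
            div_le_div₀ zero_le_one (Real.abs_cos_le_one _) (by positivity) (aux_denom hs x)
        _ = 2/Real.sqrt s := one_div_div _ _
  have hb2 : |∫ φ in (Real.sqrt s)..(π/2), g φ| ≤ π/2 * Real.log ((π/2)/Real.sqrt s) := by
    have hni := intervalIntegral.norm_integral_le_integral_norm (f := g)
      (a := Real.sqrt s) (b := π/2) (μ := MeasureTheory.volume) hqpi
    rw [Real.norm_eq_abs] at hni
    have hmono : (∫ φ in (Real.sqrt s)..(π/2), ‖g φ‖)
        ≤ ∫ φ in (Real.sqrt s)..(π/2), π/2 * (1/φ) := by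
      apply intervalIntegral.integral_mono_on hqpi (hcont.norm.intervalIntegrable _ _)
      · apply ContinuousOn.intervalIntegrable
        apply ContinuousOn.mul continuousOn_const
        apply ContinuousOn.div continuousOn_const continuousOn_id
        intro x hx
        rw [Set.uIcc_of_le hqpi] at hx
        exact (lt_of_lt_of_le hq hx.1).ne'
      · intro x hx
        have hx0 : 0 < x := lt_of_lt_of_le hq hx.1
        have hsinb : 2/π * x ≤ Real.sin x := Real.mul_le_sin hx0.le hx.2
        have hsinpos : 0 < Real.sin x := lt_of_lt_of_le (by positivity) hsinb
        have hden : Real.sin x ≤ Real.sqrt (Real.sin x ^ 2 + s/4) := by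
          have h' : Real.sqrt (Real.sin x ^ 2) ≤ Real.sqrt (Real.sin x ^ 2 + s/4) :=
            Real.sqrt_le_sqrt (by linarith)
          rwa [Real.sqrt_sq hsinpos.le] at h'
        rw [Real.norm_eq_abs, abs_div, abs_of_nonneg (Real.sqrt_nonneg _)]
        calc |Real.cos (2*x)| / Real.sqrt (Real.sin x ^ 2 + s/4)
            ≤ 1 / (2/π * x) :=
              div_le_div₀ zero_le_one (Real.abs_cos_le_one _) (by positivity) (hsinb.trans hden)
          _ = π/2 * (1/x) := by
              have := Real.pi_pos; field_simp
    have hval : (∫ φ in (Real.sqrt s)..(π/2), π/2 * (1/φ))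
        = π/2 * Real.log ((π/2)/Real.sqrt s) := by
      rw [intervalIntegral.integral_const_mul, integral_one_div_of_pos hq (by positivity)]
    calc |∫ φ in (Real.sqrt s)..(π/2), g φ| ≤ ∫ φ in (Real.sqrt s)..(π/2), ‖g φ‖ := hni
      _ ≤ ∫ φ in (Real.sqrt s)..(π/2), π/2 * (1/φ) := hmono
      _ = π/2 * Real.log ((π/2)/Real.sqrt s) := hval
  have hlog : Real.log ((π/2)/Real.sqrt s) = Real.log (π/2) - Real.log s / 2 := by
    rw [Real.log_div (by positivity) hq.ne', Real.log_sqrt hs.le]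
  calc |∫ φ in (0:ℝ)..(π/2), g φ|
      = |(∫ φ in (0:ℝ)..(Real.sqrt s), g φ) + ∫ φ in (Real.sqrt s)..(π/2), g φ| := by rw [hsplit]
    _ ≤ |∫ φ in (0:ℝ)..(Real.sqrt s), g φ| + |∫ φ in (Real.sqrt s)..(π/2), g φ| := abs_add_le _ _
    _ ≤ 2 + π/2 * Real.log ((π/2)/Real.sqrt s) := add_le_add hb1 hb2
    _ = 2 + π/2 * Real.log (π/2) - π/4 * Real.log s := by rw [hlog]; ring

/-- For `F(s) = ∫₀^{π/2} cos(2φ)/(sin²φ + s/4)^{1/2} dφ` and `α ∈ (0, 3/2]`,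
the function `s ↦ s^α F(s)` is bounded on `(0, ∞)`. -/
theorem stmt2 (F : ℝ → ℝ)
    (hF : ∀ s : ℝ, 0 < s →
      F s = ∫ φ in (0:ℝ)..(π/2), Real.cos (2*φ) / Real.sqrt (Real.sin φ ^ 2 + s/4))
    (α : ℝ) (hα : α ∈ Set.Ioc (0:ℝ) (3/2)) :
    ∃ C : ℝ, ∀ s : ℝ, 0 < s → |s ^ α * F s| ≤ C := by
  obtain ⟨hα0, hα2⟩ := hα
  have hpi3 := Real.pi_gt_three
  refine ⟨max (2 + π/2 * Real.log (π/2) + π/(2*α)) (2*π), fun s hs => ?_⟩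
  rw [abs_mul, abs_of_nonneg (Real.rpow_nonneg hs.le α)]
  rcases le_or_gt s 1 with h1 | h1
  · -- small s
    have hFb := aux_small hs h1
    rw [← hF s hs] at hFb
    have hlogs : Real.log s ≤ 0 := Real.log_nonpos hs.le h1
    have hsa : s^α ≤ 1 := Real.rpow_le_one hs.le h1 hα0.le
    have hlogpi : 0 ≤ Real.log (π/2) := Real.log_nonneg (by linarith)
    have hA : (0:ℝ) ≤ 2 + π/2 * Real.log (π/2) := by
      have : 0 ≤ π/2 * Real.log (π/2) := by positivity
      linarith
    have hkey : s^α * (-Real.log s) ≤ 2/α := by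
      have hlr : Real.log s⁻¹ ≤ (s⁻¹)^(α/2)/(α/2) :=
        Real.log_le_rpow_div (by positivity) (by positivity)
      rw [Real.log_inv, Real.inv_rpow hs.le] at hlr
      have hsa2 : s^α * (s^(α/2))⁻¹ = s^(α/2) := by
        rw [← Real.rpow_neg hs.le, ← Real.rpow_add hs]; ring_nf
      have h2 : s^(α/2) ≤ 1 := Real.rpow_le_one hs.le h1 (by positivity)
      calc s^α * (-Real.log s) ≤ s^α * ((s^(α/2))⁻¹/(α/2)) :=
            mul_le_mul_of_nonneg_left hlr (Real.rpow_nonneg hs.le α)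
        _ = s^(α/2) * (2/α) := by
            rw [div_eq_mul_inv, ← mul_assoc, hsa2, inv_div]
        _ ≤ 1 * (2/α) := mul_le_mul_of_nonneg_right h2 (by positivity)
        _ = 2/α := one_mul _
    calc s^α * |F s| ≤ s^α * (2 + π/2 * Real.log (π/2) - π/4 * Real.log s) :=
          mul_le_mul_of_nonneg_left hFb (Real.rpow_nonneg hs.le α)
      _ = s^α * (2 + π/2 * Real.log (π/2)) + π/4 * (s^α * (-Real.log s)) := by ring
      _ ≤ 1 * (2 + π/2 * Real.log (π/2)) + π/4 * (2/α) :=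
          add_le_add (mul_le_mul_of_nonneg_right hsa hA)
            (mul_le_mul_of_nonneg_left hkey (by positivity))
      _ = 2 + π/2 * Real.log (π/2) + π/(2*α) := by
          rw [one_mul]; ring
      _ ≤ max (2 + π/2 * Real.log (π/2) + π/(2*α)) (2*π) := le_max_left _ _
  · -- large s
    have hFb := aux_big hs
    rw [← hF s hs] at hFb
    have hss : 0 < Real.sqrt s := Real.sqrt_pos.mpr hs
    have hpow : s * Real.sqrt s = s^((3:ℝ)/2) := by
      rw [show (3:ℝ)/2 = 1 + 1/2 by norm_num, Real.rpow_add hs, Real.rpow_one,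
        ← Real.sqrt_eq_rpow]
    calc s^α * |F s| ≤ s^α * (2*π/(s*Real.sqrt s)) :=
          mul_le_mul_of_nonneg_left hFb (Real.rpow_nonneg hs.le α)
      _ = 2*π * (s^α / s^((3:ℝ)/2)) := by rw [hpow]; ring
      _ = 2*π * s^(α - 3/2) := by rw [Real.rpow_sub hs]
      _ ≤ 2*π * 1 :=
          mul_le_mul_of_nonneg_left
            (Real.rpow_le_one_of_one_le_of_nonpos h1.le (by linarith)) (by positivity)
      _ = 2*π := mul_one _
      _ ≤ max (2 + π/2 * Real.log (π/2) + π/(2*α)) (2*π) := le_max_right _ _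
end

section
/- Define H(t) = (1/√(πt)) ∫_{-π/2}^{π/2} e^{-sin²φ / t} cos(2φ) dφ for t > 0. Then for every α ∈ [0, 3/2], the function t ↦ t^α H(t) is bounded on (0, ∞). -/
open Real MeasureTheory

/-!
Write `H(t) = I(t) / √(πt)`. For small `t`, Jordan's inequality `|sin φ| ≥ 2|φ|/π` dominates the
integrand of `I(t)` by a Gaussian of variance `~ t`, so `|I(t)| ≤ (π/2)√(πt)` and `H` is bounded.
For large `t`, since `∫ cos 2φ = 0` over a period, `e^{-sin²φ/t}` may be replaced by
`e^{-sin²φ/t} - 1 = O(1/t)`, so `|I(t)| ≤ π/t` and `H(t) = O(t^{-3/2})`.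
-/

noncomputable def kernelIntegral (t : ℝ) : ℝ :=
  ∫ φ in (-(π/2))..(π/2), exp (-(sin φ)^2 / t) * cos (2*φ)

noncomputable def kernelProfile (t : ℝ) : ℝ :=
  1 / √(π * t) * kernelIntegral t

lemma sq_two_div_pi_mul_le_sin_sq {φ : ℝ} (h : |φ| ≤ π/2) : (2/π * φ)^2 ≤ sin φ ^ 2 := by
  refine sq_le_sq.2 ?_
  rw [abs_mul, abs_of_pos (by positivity : 0 < 2/π)]
  exact mul_abs_le_abs_sin h

lemma intervalIntegral_exp_neg_mul_sq_le {b : ℝ} (hb : 0 < b) {a c : ℝ} (hac : a ≤ c) :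
    ∫ x in a..c, exp (-b * x^2) ≤ √(π / b) := by
  rw [intervalIntegral.integral_of_le hac, ← integral_gaussian b]
  exact setIntegral_le_integral (integrable_exp_neg_mul_sq hb) (.of_forall fun _ => (exp_pos _).le)

lemma abs_kernelIntegral_le_mul_sqrt {t : ℝ} (ht : 0 < t) :
    |kernelIntegral t| ≤ π/2 * √(π * t) := by
  have hab : -(π/2) ≤ π/2 := by linarith [pi_pos]
  have hb : 0 < (2/π)^2 / t := by positivity
  have gaussian_eq : π/2 * √(π * t) = √(π / ((2/π)^2 / t)) := by
    rw [show π / ((2/π)^2 / t) = (π/2)^2 * (π * t) by field_simp, sqrt_mul (sq_nonneg _),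
      sqrt_sq (by positivity)]
  rw [gaussian_eq, kernelIntegral, ← Real.norm_eq_abs]
  refine (intervalIntegral.norm_integral_le_of_norm_le hab (.of_forall fun φ hφ => ?_)
    (Continuous.intervalIntegrable (by fun_prop) _ _)).trans
    (intervalIntegral_exp_neg_mul_sq_le hb hab)
  have hsin := sq_two_div_pi_mul_le_sin_sq (abs_le.2 ⟨hφ.1.le, hφ.2⟩)
  calc ‖exp (-(sin φ)^2 / t) * cos (2*φ)‖ ≤ exp (-(sin φ)^2 / t) := by
        rw [norm_mul, norm_of_nonneg (exp_pos _).le]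
        exact mul_le_of_le_one_right (exp_pos _).le (abs_cos_le_one _)
    _ ≤ exp (-((2/π)^2 / t) * φ^2) := by
        rw [show -((2/π)^2 / t) * φ^2 = -(2/π * φ)^2 / t by ring]
        gcongr

lemma integral_cos_two_mul_neg_pi_div_two_pi_div_two :
    ∫ φ in (-(π/2))..(π/2), cos (2*φ) = 0 := by
  simp [intervalIntegral.integral_comp_mul_left (fun x => cos x) two_ne_zero, mul_div_cancel₀]

lemma abs_exp_neg_sub_one_le {x : ℝ} (hx : 0 ≤ x) : |exp (-x) - 1| ≤ x := by
  rw [abs_sub_comm, abs_of_nonneg (sub_nonneg.2 (exp_le_one_iff.2 (neg_nonpos.2 hx)))]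
  linarith [add_one_le_exp (-x)]

lemma abs_kernelIntegral_le_pi_div {t : ℝ} (ht : 0 < t) : |kernelIntegral t| ≤ π / t := by
  have hsub : kernelIntegral t =
      ∫ φ in (-(π/2))..(π/2), (exp (-(sin φ)^2 / t) - 1) * cos (2*φ) := by
    simp only [sub_mul, one_mul]
    rw [intervalIntegral.integral_sub (Continuous.intervalIntegrable (by fun_prop) _ _)
      (Continuous.intervalIntegrable (by fun_prop) _ _),
      integral_cos_two_mul_neg_pi_div_two_pi_div_two, sub_zero, kernelIntegral]
  have hbound : ∀ φ ∈ Set.uIoc (-(π/2)) (π/2),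
      ‖(exp (-(sin φ)^2 / t) - 1) * cos (2*φ)‖ ≤ 1 / t := by
    intro φ _
    rw [norm_mul, neg_div]
    calc ‖exp (-((sin φ)^2 / t)) - 1‖ * ‖cos (2*φ)‖ ≤ (sin φ)^2 / t * 1 :=
          mul_le_mul (abs_exp_neg_sub_one_le (by positivity)) (abs_cos_le_one _)
            (norm_nonneg _) (by positivity)
      _ ≤ 1 / t := by rw [mul_one]; gcongr; exact sin_sq_le_one φ
  calc |kernelIntegral t| ≤ 1 / t * |π/2 - -(π/2)| :=
        hsub ▸ intervalIntegral.norm_integral_le_of_norm_le_const hbound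
    _ = π / t := by rw [sub_neg_eq_add, add_halves, abs_of_pos pi_pos, one_div_mul_eq_div]

lemma abs_kernelProfile_le {t : ℝ} (ht : 0 < t) : |kernelProfile t| ≤ π/2 := by
  have hs : 0 < √(π * t) := sqrt_pos.2 (by positivity)
  rw [kernelProfile, abs_mul, abs_one_div, abs_of_pos hs, one_div_mul_eq_div, div_le_iff₀ hs]
  exact abs_kernelIntegral_le_mul_sqrt ht

lemma rpow_three_halves_mul_abs_kernelProfile_le {t : ℝ} (ht : 0 < t) :
    t ^ (3/2 : ℝ) * |kernelProfile t| ≤ √π := by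
  have hs : 0 < √(π * t) := sqrt_pos.2 (by positivity)
  have h32 : t ^ (3/2 : ℝ) = t * √t := by
    rw [show (3/2 : ℝ) = 1 + 1/2 by norm_num, rpow_add ht, rpow_one, sqrt_eq_rpow]
  rw [kernelProfile, abs_mul, abs_one_div, abs_of_pos hs, h32, sqrt_mul pi_pos.le]
  calc t * √t * (1 / (√π * √t) * |kernelIntegral t|) = t * |kernelIntegral t| / √π := by
        field_simp
    _ ≤ t * (π / t) / √π := by gcongr; exact abs_kernelIntegral_le_pi_div ht
    _ = √π := by rw [mul_div_cancel₀ _ ht.ne', div_sqrt]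

/-- For `H(t) = (1/√(πt)) ∫_{-π/2}^{π/2} e^{-sin²φ/t} cos(2φ) dφ` and `α ∈ [0, 3/2]`,
the function `t ↦ t^α H(t)` is bounded on `(0, ∞)`. -/
theorem stmt3 (H : ℝ → ℝ)
    (hH : ∀ t : ℝ, 0 < t →
      H t = (1 / Real.sqrt (π * t)) *
        ∫ φ in (-(π/2))..(π/2), Real.exp (-(Real.sin φ)^2 / t) * Real.cos (2*φ))
    (α : ℝ) (hα : α ∈ Set.Icc (0:ℝ) (3/2)) :
    ∃ C : ℝ, ∀ t : ℝ, 0 < t → |t ^ α * H t| ≤ C := by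
  obtain ⟨hα0, hα32⟩ := hα
  refine ⟨max (π/2) √π, fun t ht => ?_⟩
  have hHt : H t = kernelProfile t := hH t ht
  rw [abs_mul, abs_of_pos (rpow_pos_of_pos ht α), hHt]
  rcases le_total t 1 with ht1 | ht1
  · calc t ^ α * |kernelProfile t| ≤ 1 * (π/2) := by
          gcongr
          · exact rpow_le_one ht.le ht1 hα0
          · exact abs_kernelProfile_le ht
      _ ≤ max (π/2) √π := by rw [one_mul]; exact le_max_left _ _
  · calc t ^ α * |kernelProfile t| ≤ t ^ (3/2 : ℝ) * |kernelProfile t| := by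
          gcongr
      _ ≤ max (π/2) √π := (rpow_three_halves_mul_abs_kernelProfile_le ht).trans (le_max_right _ _)
end

section
/- Define H(t) = (1/√(πt)) ∫_{-π/2}^{π/2} e^{-sin²φ / t} cos(2φ) dφ for t > 0. Then H(t) → 1 as t → 0⁺. -/
open Real Filter MeasureTheory

-- sin y / y → 1
lemma sin_div_tendsto_one : Tendsto (fun y : ℝ => Real.sin y / y) (nhdsWithin 0 {0}ᶜ) (nhds 1) := by
  have h := (Real.hasDerivAt_sin 0)
  rw [hasDerivAt_iff_tendsto_slope] at h
  convert h using 2 with y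
  · simp [slope_def_field]
  · simp

lemma sin_scale_tendsto (x : ℝ) :
    Tendsto (fun t : ℝ => Real.sin (Real.sqrt t * x) / Real.sqrt t)
      (nhdsWithin 0 (Set.Ioi 0)) (nhds x) := by
  rcases eq_or_ne x 0 with rfl | hx
  · simpa using tendsto_const_nhds (α := ℝ) (x := (0:ℝ)) (f := nhdsWithin 0 (Set.Ioi 0))
  · have hmap : Tendsto (fun t : ℝ => Real.sqrt t * x) (nhdsWithin 0 (Set.Ioi 0))
        (nhdsWithin 0 {0}ᶜ) := by
      rw [tendsto_nhdsWithin_iff]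
      constructor
      · have : Tendsto (fun t : ℝ => Real.sqrt t * x) (nhds 0) (nhds 0) := by
          have := (Real.continuous_sqrt.tendsto 0).mul_const x
          simpa using this
        exact this.mono_left nhdsWithin_le_nhds
      · filter_upwards [self_mem_nhdsWithin] with t ht
        have : Real.sqrt t ≠ 0 := (Real.sqrt_pos.mpr ht).ne'
        exact mul_ne_zero this hx
    have h1 : Tendsto (fun t : ℝ => Real.sin (Real.sqrt t * x) / (Real.sqrt t * x))
        (nhdsWithin 0 (Set.Ioi 0)) (nhds 1) := sin_div_tendsto_one.comp hmap
    have h2 := h1.const_mul x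
    rw [mul_one] at h2
    refine h2.congr' ?_
    filter_upwards [self_mem_nhdsWithin] with t ht
    have hs : Real.sqrt t ≠ 0 := (Real.sqrt_pos.mpr ht).ne'
    field_simp

lemma limF (x : ℝ) :
    Tendsto (fun t : ℝ => Real.exp (-(Real.sin (Real.sqrt t * x))^2 / t) *
        Real.cos (2 * (Real.sqrt t * x)))
      (nhdsWithin 0 (Set.Ioi 0)) (nhds (Real.exp (-x^2))) := by
  have h1 : Tendsto (fun t : ℝ => -(Real.sin (Real.sqrt t * x))^2 / t)
      (nhdsWithin 0 (Set.Ioi 0)) (nhds (-x^2)) := by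
    have h2 := ((sin_scale_tendsto x).pow 2).neg
    refine h2.congr' ?_
    filter_upwards [self_mem_nhdsWithin] with t ht
    have h0 : (Real.sqrt t)^2 = t := Real.sq_sqrt (le_of_lt ht)
    rw [div_pow, h0, neg_div]
  have hexp : Tendsto (fun t : ℝ => Real.exp (-(Real.sin (Real.sqrt t * x))^2 / t))
      (nhdsWithin 0 (Set.Ioi 0)) (nhds (Real.exp (-x^2))) :=
    (Real.continuous_exp.tendsto _).comp h1
  have hcos : Tendsto (fun t : ℝ => Real.cos (2 * (Real.sqrt t * x)))
      (nhdsWithin 0 (Set.Ioi 0)) (nhds 1) := by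
    have hc : Continuous fun t : ℝ => Real.cos (2 * (Real.sqrt t * x)) := by continuity
    have := (hc.tendsto 0).mono_left (nhdsWithin_le_nhds (s := Set.Ioi 0))
    simpa using this
  simpa using hexp.mul hcos

set_option maxHeartbeats 1000000 in
/-- For `H(t) = (1/√(πt)) ∫_{-π/2}^{π/2} e^{-sin²φ/t} cos(2φ) dφ`, we have `H(t) → 1`
as `t → 0⁺`. -/
theorem stmt4 (H : ℝ → ℝ)
    (hH : ∀ t : ℝ, 0 < t →
      H t = (1 / Real.sqrt (π * t)) *
        ∫ φ in (-(π/2))..(π/2), Real.exp (-(Real.sin φ)^2 / t) * Real.cos (2*φ)) :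
    Tendsto H (nhdsWithin 0 (Set.Ioi 0)) (nhds 1) := by
  have hπ : (0:ℝ) < π := Real.pi_pos
  set F : ℝ → ℝ → ℝ := fun t x =>
    (Set.Ioc (-(π / (2 * Real.sqrt t))) (π / (2 * Real.sqrt t))).indicator
      (fun x => Real.exp (-(Real.sin (Real.sqrt t * x))^2 / t) *
        Real.cos (2 * (Real.sqrt t * x))) x with hFdef
  have bound_pos : (0:ℝ) < 4 / π ^ 2 := by positivity
  -- dominated convergence
  have key : Tendsto (fun t => ∫ x, F t x) (nhdsWithin 0 (Set.Ioi 0))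
      (nhds (∫ x : ℝ, Real.exp (-(1:ℝ) * x ^ 2))) := by
    apply MeasureTheory.tendsto_integral_filter_of_dominated_convergence
      (fun x => Real.exp (-(4 / π ^ 2) * x ^ 2))
    · filter_upwards with t
      refine (Continuous.aestronglyMeasurable ?_).indicator measurableSet_Ioc
      fun_prop
    · filter_upwards [self_mem_nhdsWithin] with t ht
      filter_upwards with x
      have ht' : (0:ℝ) < t := ht
      have hs : 0 < Real.sqrt t := Real.sqrt_pos.mpr ht'
      by_cases hm : x ∈ Set.Ioc (-(π / (2 * Real.sqrt t))) (π / (2 * Real.sqrt t))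
      · rw [hFdef]
        simp only [Set.indicator_of_mem hm]
        set y := Real.sqrt t * x with hy
        have hyabs : |y| ≤ π / 2 := by
          rw [hy, abs_mul, abs_of_pos hs]
          rcases hm with ⟨h1, h2⟩
          have hxabs : |x| ≤ π / (2 * Real.sqrt t) := abs_le.mpr ⟨le_of_lt h1, h2⟩
          have := mul_le_mul_of_nonneg_left hxabs (le_of_lt hs)
          calc Real.sqrt t * |x| ≤ Real.sqrt t * (π / (2 * Real.sqrt t)) := this
            _ = π / 2 := by field_simp
        have hjord : 2 / π * |y| ≤ Real.sin |y| := Real.mul_le_sin (abs_nonneg y) hyabs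
        have hsq : (2 / π * |y|) ^ 2 ≤ (Real.sin |y|) ^ 2 :=
          pow_le_pow_left₀ (by positivity) hjord 2
        have habs2 : (Real.sin |y|) ^ 2 = (Real.sin y) ^ 2 := by
          rcases abs_choice y with h | h
          · rw [h]
          · rw [h, Real.sin_neg]; ring
        have hy2 : y ^ 2 = t * x ^ 2 := by
          rw [hy, mul_pow, Real.sq_sqrt (le_of_lt ht')]
        have hkey : (4 / π ^ 2) * x ^ 2 ≤ (Real.sin y) ^ 2 / t := by
          rw [le_div_iff₀ ht']
          have h1 : (2 / π * |y|) ^ 2 = 4 / π ^ 2 * y ^ 2 := by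
            rw [mul_pow, sq_abs]; ring
          nlinarith [hsq, habs2, hy2]
        have hexple : Real.exp (-(Real.sin y) ^ 2 / t) ≤ Real.exp (-(4 / π ^ 2) * x ^ 2) := by
          apply Real.exp_le_exp.mpr
          rw [neg_div]
          linarith
        have hcos1 : |Real.cos (2 * y)| ≤ 1 := Real.abs_cos_le_one _
        calc ‖Real.exp (-(Real.sin y) ^ 2 / t) * Real.cos (2 * y)‖
            = Real.exp (-(Real.sin y) ^ 2 / t) * |Real.cos (2 * y)| := by
              rw [norm_mul, Real.norm_eq_abs, Real.norm_eq_abs, abs_of_pos (Real.exp_pos _)]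
          _ ≤ Real.exp (-(Real.sin y) ^ 2 / t) * 1 :=
              mul_le_mul_of_nonneg_left hcos1 (Real.exp_pos _).le
          _ = Real.exp (-(Real.sin y) ^ 2 / t) := mul_one _
          _ ≤ Real.exp (-(4 / π ^ 2) * x ^ 2) := hexple
      · rw [hFdef]
        simp only [Set.indicator_of_notMem hm]
        simp only [norm_zero]
        positivity
    · exact integrable_exp_neg_mul_sq bound_pos
    · refine Filter.Eventually.of_forall fun x => ?_
      have hx1 : (0:ℝ) < |x| + 1 := by positivity
      set ε : ℝ := (π / (2 * (|x| + 1))) ^ 2 with hε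
      have hεpos : 0 < ε := by positivity
      have hmem : ∀ᶠ t in nhdsWithin 0 (Set.Ioi 0),
          F t x = Real.exp (-(Real.sin (Real.sqrt t * x))^2 / t) *
            Real.cos (2 * (Real.sqrt t * x)) := by
        filter_upwards [Ioo_mem_nhdsGT_of_mem (Set.mem_Ico.mpr ⟨le_refl 0, hεpos⟩)] with t ht
        rcases ht with ⟨ht0, htε⟩
        have hs : 0 < Real.sqrt t := Real.sqrt_pos.mpr ht0
        have hslt : Real.sqrt t < π / (2 * (|x| + 1)) := by
          have := Real.sqrt_lt_sqrt (le_of_lt ht0) htε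
          rwa [hε, Real.sqrt_sq (by positivity)] at this
        have hxlt : |x| < π / (2 * Real.sqrt t) := by
          rw [lt_div_iff₀ (by positivity)]
          rw [lt_div_iff₀ (by positivity)] at hslt
          nlinarith [abs_nonneg x]
        have hm : x ∈ Set.Ioc (-(π / (2 * Real.sqrt t))) (π / (2 * Real.sqrt t)) := by
          constructor
          · nlinarith [neg_abs_le x, abs_nonneg x]
          · nlinarith [le_abs_self x]
        rw [hFdef]
        simp only [Set.indicator_of_mem hm]
      have hlim := (limF x).congr' (hmem.mono fun t h => h.symm)
      have hval : Real.exp (-x ^ 2) = Real.exp (-(1:ℝ) * x ^ 2) := by ring_nf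
      rwa [hval] at hlim
  have gauss : (∫ x : ℝ, Real.exp (-(1:ℝ) * x ^ 2)) = Real.sqrt π := by
    rw [integral_gaussian]; simp
  have hHeq : ∀ᶠ t in nhdsWithin 0 (Set.Ioi 0),
      H t = (1 / Real.sqrt π) * ∫ x, F t x := by
    filter_upwards [self_mem_nhdsWithin] with t ht
    have ht' : (0:ℝ) < t := ht
    have hs : 0 < Real.sqrt t := Real.sqrt_pos.mpr ht'
    have hcv := intervalIntegral.integral_comp_mul_left
      (fun φ => Real.exp (-(Real.sin φ)^2 / t) * Real.cos (2*φ)) hs.ne'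
      (a := -(π / (2 * Real.sqrt t))) (b := π / (2 * Real.sqrt t))
    have ha : Real.sqrt t * -(π / (2 * Real.sqrt t)) = -(π/2) := by
      field_simp
    have hb : Real.sqrt t * (π / (2 * Real.sqrt t)) = π/2 := by
      field_simp
    rw [ha, hb] at hcv
    have hab : -(π / (2 * Real.sqrt t)) ≤ π / (2 * Real.sqrt t) := by
      have : 0 < π / (2 * Real.sqrt t) := by positivity
      linarith
    have hFint : (∫ x, F t x) = ∫ x in (-(π / (2 * Real.sqrt t)))..(π / (2 * Real.sqrt t)),
        Real.exp (-(Real.sin (Real.sqrt t * x))^2 / t) * Real.cos (2 * (Real.sqrt t * x)) := by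
      rw [intervalIntegral.integral_of_le hab, hFdef,
        MeasureTheory.integral_indicator measurableSet_Ioc]
    rw [hH t ht', hFint, hcv, smul_eq_mul, Real.sqrt_mul (le_of_lt hπ) t]
    have hsp : Real.sqrt π ≠ 0 := (Real.sqrt_pos.mpr hπ).ne'
    field_simp
  have hlim2 := key.const_mul (1 / Real.sqrt π)
  rw [gauss] at hlim2
  have h1 : (1 / Real.sqrt π) * Real.sqrt π = 1 := by
    have : Real.sqrt π ≠ 0 := (Real.sqrt_pos.mpr hπ).ne'
    field_simp
  rw [h1] at hlim2
  exact hlim2.congr' (hHeq.mono fun t h => h.symm)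
end
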